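/- For each integer d ≥ 3, let λ*_{sph,d} be the supremum of all λ ≥ 0 such that (λ²/2) · t^d/(1+t^d) ≤ −(1/2) log(1−t²) for all t ∈ [0,1). Then as d → ∞, (λ*_{sph,d})² = 2 log d + 2 log log d + 2 − 4 log 2 + o(1); that is, (λ*_{sph,d})² − (2 log d + 2 log log d + 2 − 4 log 2) → 0. -/

import Mathlib

/-!
Writing `t = exp (-w)`, the defining condition of `λ*` reads
`λ² ≤ -log (1 - e^{-2w}) (1 + e^{dw})` for all `w > 0`, so `λ*²` is the infimum of the right-hand
side. Put `s = dw/2` and `B = log (d/4)`. From `1 - e^{-x} ≤ x` we get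
`-log (1 - e^{-2w}) ≥ B - log s`, and `(B - log s)(1 + e^{2s}) ≥ 2 (B + 1 + log B)` whenever
`s ≤ B` (the minimum sits near `s = 1/B`); for `s ≥ B` the crude bound `-log (1 - y) ≥ y` already
gives a value at least `e^s ≥ d/4`. Conversely, the trial point `s = 1/log d` gives
`2 log d + 2 log log d + 2 - 4 log 2 + o(1)`, by `(e^y - 1)/y → 1`. The lower bound
`2 (B + 1 + log B)` has the same expansion, and the two bounds squeeze `λ*²`.
-/

open Filter

noncomputable section

/-- The spherical-prior lower-bound threshold `λ*_{sph,d}`: the supremum of all `λ ≥ 0`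
such that `(λ²/2) t^d/(1+t^d) ≤ -(1/2) log(1-t²)` for all `t ∈ [0,1)`. -/
def lamSph (d : ℕ) : ℝ :=
  sSup {l : ℝ | 0 ≤ l ∧ ∀ t ∈ Set.Ico (0:ℝ) 1,
    l^2 / 2 * (t^d / (1 + t^d)) ≤ -(1/2) * Real.log (1 - t^2)}

open Real Set Topology

def sphRatio (d : ℕ) (t : ℝ) : ℝ := -log (1 - t ^ 2) * (1 + t ^ d) / t ^ d

lemma sphRatio_nonneg {d : ℕ} {t : ℝ} (ht : t ∈ Ioo (0 : ℝ) 1) : 0 ≤ sphRatio d t := by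
  obtain ⟨ht0, ht1⟩ := ht
  have : log (1 - t ^ 2) ≤ 0 := log_nonpos (by nlinarith) (by nlinarith)
  exact div_nonneg (mul_nonneg (by linarith) (by positivity)) (by positivity)

lemma sphRatio_exp_neg (d : ℕ) (w : ℝ) :
    sphRatio d (exp (-w)) = -log (1 - exp (-(2 * w))) * (1 + exp (d * w)) := by
  simp only [sphRatio, ← exp_nat_mul]
  rw [mul_div_assoc, add_div, div_self (exp_ne_zero _), one_div, ← exp_neg]
  push_cast
  ring_nf

lemma exp_neg_mem_Ioo {w : ℝ} (hw : 0 < w) : exp (-w) ∈ Ioo (0 : ℝ) 1 :=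
  ⟨exp_pos _, exp_lt_one_iff.2 (neg_lt_zero.2 hw)⟩

lemma sq_le_sphRatio_iff {d : ℕ} {l t : ℝ} (ht : 0 < t) :
    l ^ 2 / 2 * (t ^ d / (1 + t ^ d)) ≤ -(1/2) * log (1 - t ^ 2) ↔ l ^ 2 ≤ sphRatio d t := by
  have hu : 0 < t ^ d := pow_pos ht d
  rw [sphRatio, le_div_iff₀ hu, div_mul_div_comm, div_le_iff₀ (by positivity)]
  constructor <;> intro h <;> nlinarith

lemma lamSph_condition_iff {d : ℕ} (hd : d ≠ 0) (l : ℝ) :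
    (∀ t ∈ Ico (0:ℝ) 1, l ^ 2 / 2 * (t ^ d / (1 + t ^ d)) ≤ -(1/2) * log (1 - t ^ 2)) ↔
      ∀ t ∈ Ioo (0:ℝ) 1, l ^ 2 ≤ sphRatio d t := by
  refine ⟨fun h t ht => (sq_le_sphRatio_iff ht.1).1 (h t (Ioo_subset_Ico_self ht)), ?_⟩
  rintro h t ⟨ht0, ht1⟩
  rcases ht0.eq_or_lt with rfl | ht0
  · simp [zero_pow hd]
  · exact (sq_le_sphRatio_iff ht0).2 (h t ⟨ht0, ht1⟩)

lemma bddBelow_sphRatio_image (d : ℕ) : BddBelow (sphRatio d '' Ioo 0 1) :=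
  ⟨0, forall_mem_image.2 fun _ => sphRatio_nonneg⟩

lemma lamSph_sq_eq_sInf {d : ℕ} (hd : d ≠ 0) :
    lamSph d ^ 2 = sInf (sphRatio d '' Ioo 0 1) := by
  set M := sInf (sphRatio d '' Ioo 0 1)
  have hne : (sphRatio d '' Ioo 0 1).Nonempty := (nonempty_Ioo.2 zero_lt_one).image _
  have hM : 0 ≤ M := le_csInf hne (forall_mem_image.2 fun _ => sphRatio_nonneg)
  have hset : {l : ℝ | 0 ≤ l ∧ ∀ t ∈ Ico (0:ℝ) 1,
      l ^ 2 / 2 * (t ^ d / (1 + t ^ d)) ≤ -(1/2) * log (1 - t ^ 2)} = Icc 0 (√M) := by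
    ext l
    simp only [mem_ofPred_eq, mem_Icc, lamSph_condition_iff hd, and_congr_right_iff]
    intro hl
    rw [Real.le_sqrt hl hM, le_csInf_iff (bddBelow_sphRatio_image d) hne, forall_mem_image]
  rw [lamSph, hset, csSup_Icc (sqrt_nonneg _), sq_sqrt hM]

lemma lamSph_sq_le_sphRatio {d : ℕ} (hd : d ≠ 0) {t : ℝ} (ht : t ∈ Ioo (0 : ℝ) 1) :
    lamSph d ^ 2 ≤ sphRatio d t := by
  rw [lamSph_sq_eq_sInf hd]
  exact csInf_le (bddBelow_sphRatio_image d) (mem_image_of_mem _ ht)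

lemma le_lamSph_sq {d : ℕ} (hd : d ≠ 0) {c : ℝ} (h : ∀ t ∈ Ioo (0 : ℝ) 1, c ≤ sphRatio d t) :
    c ≤ lamSph d ^ 2 := by
  rw [lamSph_sq_eq_sInf hd]
  exact le_csInf ((nonempty_Ioo.2 zero_lt_one).image _) (forall_mem_image.2 h)

lemma neg_log_le_neg_log_one_sub_exp_neg {x : ℝ} (hx : 0 < x) :
    -log x ≤ -log (1 - exp (-x)) := by
  have hpos : 0 < 1 - exp (-x) := sub_pos.2 (exp_neg_mem_Ioo hx).2
  have hle : 1 - exp (-x) ≤ x := by linarith [add_one_le_exp (-x)]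
  exact neg_le_neg (log_le_log hpos hle)

lemma exp_neg_le_neg_log_one_sub_exp_neg {x : ℝ} (hx : 0 < x) :
    exp (-x) ≤ -log (1 - exp (-x)) := by
  have hpos : 0 < 1 - exp (-x) := sub_pos.2 (exp_neg_mem_Ioo hx).2
  linarith [log_le_sub_one_of_pos hpos]

lemma two_mul_add_one_add_log_le_of_le_one {B s : ℝ} (hB : 0 < B) (hs : 0 < s) (hs1 : s ≤ 1) :
    2 * (B + 1 + log B) ≤ (B - log s) * (1 + exp (2 * s)) := by
  have hlogs : log s ≤ 0 := log_nonpos hs.le hs1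
  have hsB : 1 + log s + log B ≤ s * B := by
    linarith [log_le_sub_one_of_pos (mul_pos hs hB), log_mul hs.ne' hB.ne']
  have hslogs : s * log s ≤ 0 := mul_nonpos_of_nonneg_of_nonpos hs.le hlogs
  calc 2 * (B + 1 + log B) ≤ (B - log s) * (2 + 2 * s) := by nlinarith
    _ ≤ (B - log s) * (1 + exp (2 * s)) :=
      mul_le_mul_of_nonneg_left (by linarith [add_one_le_exp (2 * s)]) (by linarith)

lemma two_mul_add_one_add_log_le_of_one_le {B s : ℝ} (hs1 : 1 ≤ s) (hsB : s ≤ B) :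
    2 * (B + 1 + log B) ≤ (B - log s) * (1 + exp (2 * s)) := by
  have hB : 0 < B := by linarith
  have hlogB : log B ≤ 2 * (√B - 1) := by
    linarith [log_le_sub_one_of_pos (sqrt_pos.2 hB), log_sqrt hB.le]
  have hsqrt := sq_sqrt hB.le
  have he2 : 7 ≤ exp 2 := by
    have := exp_one_gt_d9
    rw [show (2:ℝ) = 1 + 1 by norm_num, exp_add]
    nlinarith
  -- with `hlogB` this reduces to `6 y ^ 2 - 20 y + 18 ≥ 0` for `y = √B`
  calc 2 * (B + 1 + log B) ≤ (B - log B) * (1 + exp 2) := by nlinarith [sq_nonneg (√B - 5/3)]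
    _ ≤ (B - log s) * (1 + exp (2 * s)) := by
      have hlogs : log s ≤ log B := log_le_log (by linarith) hsB
      gcongr
      · linarith [log_le_sub_one_of_pos hB]
      · linarith

lemma two_mul_add_one_add_log_le_exp {B : ℝ} (hB : 6 ≤ B) : 2 * (B + 1 + log B) ≤ exp B := by
  have := quadratic_le_exp_of_nonneg (by linarith : 0 ≤ B)
  nlinarith [log_le_sub_one_of_pos (by linarith : 0 < B)]

lemma two_mul_add_one_add_log_le_neg_log_one_sub_exp_neg_mul {d w : ℝ} (hd : 0 < d)
    (hB : 6 ≤ log (d / 4)) (hw : 0 < w) :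
    2 * (log (d / 4) + 1 + log (log (d / 4))) ≤
      -log (1 - exp (-(2 * w))) * (1 + exp (d * w)) := by
  set B := log (d / 4)
  set h := -log (1 - exp (-(2 * w)))
  set s := d * w / 2
  have hs : 0 < s := by positivity
  have hdw : d * w = 2 * s := by ring
  have hlog : B - log s ≤ h := by
    have h2w : log (2 * w) = log s - B := by
      rw [show 2 * w = s / (d / 4) by field_simp; ring, log_div hs.ne' (by positivity)]
    linarith [neg_log_le_neg_log_one_sub_exp_neg (by positivity : 0 < 2 * w)]
  rw [hdw]
  rcases le_or_gt s 1 with hs1 | hs1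
  · exact (two_mul_add_one_add_log_le_of_le_one (by linarith) hs hs1).trans
      (mul_le_mul_of_nonneg_right hlog (by positivity))
  rcases le_or_gt s B with hsB | hsB
  · exact (two_mul_add_one_add_log_le_of_one_le hs1.le hsB).trans
      (mul_le_mul_of_nonneg_right hlog (by positivity))
  have hd4 : 4 ≤ d := by
    have : 1 ≤ d / 4 := by
      rw [← exp_log (by positivity : 0 < d / 4)]
      exact one_le_exp (by linarith)
    linarith
  have hexp : exp s ≤ exp (-(2 * w)) * exp (2 * s) := by
    rw [← exp_add, exp_le_exp, show 2 * w = 4 * s / d by field_simp; ring]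
    have : 4 * s / d ≤ s := by rw [div_le_iff₀ hd]; nlinarith
    linarith
  have hh : exp (-(2 * w)) ≤ h := exp_neg_le_neg_log_one_sub_exp_neg (by positivity)
  calc 2 * (B + 1 + log B) ≤ exp B := two_mul_add_one_add_log_le_exp hB
    _ ≤ exp s := exp_le_exp.2 hsB.le
    _ ≤ exp (-(2 * w)) * exp (2 * s) := hexp
    _ ≤ h * (1 + exp (2 * s)) :=
      mul_le_mul hh (le_add_of_nonneg_left zero_le_one) (exp_pos _).le ((exp_pos _).le.trans hh)

lemma two_mul_add_one_add_log_le_lamSph_sq {d : ℕ} (hB : 6 ≤ log ((d : ℝ) / 4)) :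
    2 * (log ((d : ℝ) / 4) + 1 + log (log ((d : ℝ) / 4))) ≤ lamSph d ^ 2 := by
  have hd : d ≠ 0 := by
    rintro rfl
    norm_num at hB
  refine le_lamSph_sq hd fun t ⟨ht0, ht1⟩ => ?_
  rw [← exp_log ht0, ← neg_neg (log t), sphRatio_exp_neg]
  exact two_mul_add_one_add_log_le_neg_log_one_sub_exp_neg_mul (by positivity) hB
    (neg_pos.2 (log_neg ht0 ht1))

lemma tendsto_log_natCast_atTop : Tendsto (fun d : ℕ => log d) atTop atTop :=
  tendsto_log_atTop.comp tendsto_natCast_atTop_atTop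

lemma tendsto_two_mul_add_one_add_log_sub :
    Tendsto (fun d : ℕ => 2 * (log ((d : ℝ) / 4) + 1 + log (log ((d : ℝ) / 4))) -
      (2 * log d + 2 * log (log d) + 2 - 4 * log 2)) atTop (𝓝 0) := by
  have := ((tendsto_log_comp_add_sub_log (-log 4)).comp tendsto_log_natCast_atTop).const_mul 2
  rw [mul_zero] at this
  refine this.congr' ?_
  filter_upwards [eventually_gt_atTop 0] with d hd
  rw [Function.comp_apply, log_div (by positivity) four_ne_zero, log_four_eq]
  ring_nf

lemma tendsto_exp_sub_one_div : Tendsto (fun y => (exp y - 1) / y) (𝓝[≠] 0) (𝓝 1) := by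
  simpa [div_eq_inv_mul] using (hasDerivAt_exp 0).tendsto_slope_zero

lemma tendsto_neg_log_one_sub_exp_neg_add_log :
    Tendsto (fun x => -log (1 - exp (-x)) + log x) (𝓝[>] 0) (𝓝 0) := by
  have hneg : Tendsto (fun x : ℝ => -x) (𝓝[>] 0) (𝓝[≠] 0) :=
    tendsto_nhdsWithin_of_tendsto_nhds_of_eventually_within _
      (by simpa using (continuous_neg.tendsto (0 : ℝ)).mono_left nhdsWithin_le_nhds)
      (eventually_nhdsWithin_of_forall fun x hx => neg_ne_zero.2 (ne_of_gt hx))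
  have hquot : Tendsto (fun x => (1 - exp (-x)) / x) (𝓝[>] 0) (𝓝 1) :=
    (tendsto_exp_sub_one_div.comp hneg).congr fun x => by
      rw [Function.comp_apply, div_neg, ← neg_div, neg_sub]
  have := ((continuousAt_log one_ne_zero).tendsto.comp hquot).neg
  rw [log_one, neg_zero] at this
  refine this.congr' (eventually_nhdsWithin_of_forall fun x (hx : 0 < x) => ?_)
  have : 0 < 1 - exp (-x) := sub_pos.2 (exp_neg_mem_Ioo hx).2
  rw [Function.comp_apply, log_div this.ne' hx.ne']
  ring

lemma tendsto_sphRatio_sub :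
    Tendsto (fun d : ℕ => sphRatio d (exp (-(2 / (d * log d)))) -
      (2 * log d + 2 * log (log d) + 2 - 4 * log 2)) atTop (𝓝 0) := by
  have hL := tendsto_log_natCast_atTop
  have hdL : Tendsto (fun d : ℕ => (d : ℝ) * log d) atTop atTop :=
    tendsto_natCast_atTop_atTop.atTop_mul_atTop₀ hL
  have hL0 : ∀ᶠ d : ℕ in atTop, 0 < log (d : ℝ) := hL.eventually_gt_atTop 0
  have hx : Tendsto (fun d : ℕ => 4 / ((d : ℝ) * log d)) atTop (𝓝[>] 0) :=
    tendsto_nhdsWithin_iff.2 ⟨tendsto_const_nhds.div_atTop hdL,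
      (hdL.eventually_gt_atTop 0).mono fun d hd => div_pos four_pos hd⟩
  have hy : Tendsto (fun d : ℕ => 2 / log (d : ℝ)) atTop (𝓝[≠] 0) :=
    tendsto_nhdsWithin_iff.2 ⟨tendsto_const_nhds.div_atTop hL,
      hL0.mono fun d hd => (div_pos two_pos hd).ne'⟩
  have hP : Tendsto (fun d : ℕ => 1 + log (log d) / log d - log 4 / log d) atTop (𝓝 1) := by
    simpa using (tendsto_const_nhds.add
      (isLittleO_log_id_atTop.tendsto_div_nhds_zero.comp hL)).sub
      (tendsto_const_nhds.div_atTop hL)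
  have hlim := ((tendsto_neg_log_one_sub_exp_neg_add_log.comp hx).mul
    (tendsto_const_nhds (x := (1 : ℝ)).add
      ((continuous_exp.tendsto 0).comp (hy.mono_right nhdsWithin_le_nhds)))).add
    (((hP.mul (tendsto_const_nhds (x := (2 : ℝ)))).mul (tendsto_exp_sub_one_div.comp hy)).sub
      (tendsto_const_nhds (x := (2 : ℝ))))
  norm_num at hlim
  refine hlim.congr' ?_
  filter_upwards [hL0, eventually_gt_atTop 0] with d hL hd
  have h2w : 2 * (2 / (d * log d)) = 4 / (d * log d) := by ring
  have hdw : (d : ℝ) * (2 / (d * log d)) = 2 / log d := by field_simp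
  rw [sphRatio_exp_neg, h2w, hdw, log_div four_ne_zero (by positivity),
    log_mul (by positivity) hL.ne', log_four_eq]
  field_simp
  ring

/-- **Asymptotics of the spherical lower-bound threshold.** As `d → ∞`,
`(λ*_{sph,d})² = 2 log d + 2 log log d + 2 - 4 log 2 + o(1)`. -/
theorem lamSph_asymptotics :
    Tendsto (fun d : ℕ =>
        (lamSph d)^2 - (2 * Real.log d + 2 * Real.log (Real.log d) + 2 - 4 * Real.log 2))
      atTop (nhds 0) := by
  refine tendsto_of_tendsto_of_tendsto_of_le_of_le' tendsto_two_mul_add_one_add_log_sub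
    tendsto_sphRatio_sub ?_ ?_
  · have hlog : Tendsto (fun d : ℕ => log ((d : ℝ) / 4)) atTop atTop :=
      tendsto_log_atTop.comp (tendsto_natCast_atTop_atTop.atTop_div_const four_pos)
    filter_upwards [hlog.eventually_ge_atTop 6] with d hB
    exact sub_le_sub_right (two_mul_add_one_add_log_le_lamSph_sq hB) _
  · filter_upwards [eventually_gt_atTop 1] with d hd
    have hL : 0 < log (d : ℝ) := log_pos (by exact_mod_cast hd)
    exact sub_le_sub_right (lamSph_sq_le_sphRatio (by omega) (exp_neg_mem_Ioo (by positivity))) _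

end
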